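/- Let (P^{kl}, Φ_{kl}) and (Q^{l}, Ψ_{l}) solve the two HMM cell problems on the cube I_δ(x_α) (as in the HMM model), and define the HMM effective coefficients by c^H_{ijkl} = ⟨ c^{(ε)}_{ijnh} ∂P^{kl}_n/∂x_h + e^{(ε)}_{hij} ∂Φ_{kl}/∂x_h ⟩_{I_δ}, e^H_{ikl} = ⟨ e^{(ε)}_{inh} ∂P^{kl}_n/∂x_h − ϵ^{(ε)}_{ih} ∂Φ_{kl}/∂x_h ⟩_{I_δ}, and ϵ^H_{il} = −⟨ e^{(ε)}_{inh} ∂Q^{l}_n/∂x_h − ϵ^{(ε)}_{ih} ∂Ψ_l/∂x_h ⟩_{I_δ}. Then the effective tensors inherit the symmetries of the microscopic tensors: c^H_{ijkl} = c^H_{jikl} = c^H_{klij}, e^H_{kij} = e^H_{kji}, and ϵ^H_{ij} = ϵ^H_{ji}. -/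

import Mathlib

open MeasureTheory Filter

noncomputable section

/-- Partial derivative of `f` in the `j`-th coordinate direction. -/
def pd (f : (Fin 3 → ℝ) → ℝ) (j : Fin 3) (x : Fin 3 → ℝ) : ℝ :=
  fderiv ℝ f x (Pi.single j 1)

/-- The cube `I_δ(c) = c + [-δ/2, δ/2]^3`. -/
def cube (c : Fin 3 → ℝ) (δ : ℝ) : Set (Fin 3 → ℝ) :=
  Set.univ.pi fun i => Set.Icc (c i - δ / 2) (c i + δ / 2)

/-- A model for membership in `H¹₀(s)`: differentiable, vanishing on the boundary
of `s`, with the function and its gradient square integrable on `s`. -/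
def H10 (s : Set (Fin 3 → ℝ)) (f : (Fin 3 → ℝ) → ℝ) : Prop :=
  Differentiable ℝ f ∧ (∀ x ∈ frontier s, f x = 0) ∧
    IntegrableOn (fun x => f x ^ 2) s ∧ ∀ j, IntegrableOn (fun x => pd f j x ^ 2) s

/-- Bounded measurable (i.e. `L^∞`) scalar function. -/
def BddMeas (f : (Fin 3 → ℝ) → ℝ) : Prop :=
  Measurable f ∧ ∃ M, ∀ x, |f x| ≤ M

/-- The HMM effective elastic coefficient
`c^H_{ijkl} = ⟨ c_{ijnh} ∂_h P^{kl}_n + e_{hij} ∂_h Φ_{kl} ⟩_{I_δ}`. -/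
def cH (c : Fin 3 → Fin 3 → Fin 3 → Fin 3 → (Fin 3 → ℝ) → ℝ)
    (e : Fin 3 → Fin 3 → Fin 3 → (Fin 3 → ℝ) → ℝ) (s : Set (Fin 3 → ℝ))
    (P : Fin 3 → Fin 3 → Fin 3 → (Fin 3 → ℝ) → ℝ)
    (Φ : Fin 3 → Fin 3 → (Fin 3 → ℝ) → ℝ) (i j k l : Fin 3) : ℝ :=
  ⨍ x in s, ((∑ n, ∑ h, c i j n h x * pd (P k l n) h x) + ∑ h, e h i j x * pd (Φ k l) h x)

/-- The HMM effective piezoelectric coefficient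
`e^H_{ikl} = ⟨ e_{inh} ∂_h P^{kl}_n − ϵ_{ih} ∂_h Φ_{kl} ⟩_{I_δ}`. -/
def eH (e : Fin 3 → Fin 3 → Fin 3 → (Fin 3 → ℝ) → ℝ)
    (ϵ : Fin 3 → Fin 3 → (Fin 3 → ℝ) → ℝ) (s : Set (Fin 3 → ℝ))
    (P : Fin 3 → Fin 3 → Fin 3 → (Fin 3 → ℝ) → ℝ)
    (Φ : Fin 3 → Fin 3 → (Fin 3 → ℝ) → ℝ) (i k l : Fin 3) : ℝ :=
  ⨍ x in s, ((∑ n, ∑ h, e i n h x * pd (P k l n) h x) - ∑ h, ϵ i h x * pd (Φ k l) h x)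

/-- The HMM effective dielectric coefficient
`ϵ^H_{il} = −⟨ e_{inh} ∂_h Q^{l}_n − ϵ_{ih} ∂_h Ψ_l ⟩_{I_δ}`. -/
def epsH (e : Fin 3 → Fin 3 → Fin 3 → (Fin 3 → ℝ) → ℝ)
    (ϵ : Fin 3 → Fin 3 → (Fin 3 → ℝ) → ℝ) (s : Set (Fin 3 → ℝ))
    (Q : Fin 3 → Fin 3 → (Fin 3 → ℝ) → ℝ)
    (Ψ : Fin 3 → (Fin 3 → ℝ) → ℝ) (i l : Fin 3) : ℝ :=
  -⨍ x in s, ((∑ n, ∑ h, e i n h x * pd (Q l n) h x) - ∑ h, ϵ i h x * pd (Ψ l) h x)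


/-!
Write `B((u, φ), (v, ψ)) = ∫ σ(u, φ) : ∇v + D(u, φ) · ∇ψ` for the energy pairing of the
piezoelectric system, with stress `σ_{pq} = c_{pqnh} ∂_h u_n + e_{hpq} ∂_h φ` and electric
displacement `D_m = e_{mnh} ∂_h u_n − ϵ_{mh} ∂_h φ`. If `(u, φ)` solves the weak equations, testing
them with `v − (boundary data) ∈ H¹₀` and `ψ − (boundary data) ∈ H¹₀` shows
`B((u, φ), (P^{ij}, Φ_{ij})) = ∫ σ_{ij}(u, φ)` and `B((u, φ), (Q^i, Ψ_i)) = ∫ D_i(u, φ)`.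
The symmetries `c_{pqnh} = c_{nhpq}` and `ϵ_{mh} = ϵ_{hm}` make `B` symmetric, the piezoelectric
terms trading places. Hence `c^H_{ijkl} ∝ B(P^{kl}, P^{ij})` and `ϵ^H_{il} ∝ -B(Q^l, Q^i)` are
symmetric, while `e^H_{kij} ∝ B(P^{ij}, Q^k) = B(Q^k, P^{ij}) = ∫ σ_{ij}(Q^k, Ψ_k)` is symmetric in
`i, j` because the stress is. The minor symmetry of `c^H` already holds for the integrand.
-/

local notation "ℝ³" => Fin 3 → ℝ

theorem measurable_pd (f : ℝ³ → ℝ) (j : Fin 3) : Measurable (pd f j) :=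
  measurable_fderiv_apply_const ℝ f _

theorem pd_sub {f g : ℝ³ → ℝ} (hf : Differentiable ℝ f) (hg : Differentiable ℝ g)
    (j : Fin 3) (x : ℝ³) : pd (fun y => f y - g y) j x = pd f j x - pd g j x := by
  simp only [pd, fderiv_fun_sub (hf x) (hg x), sub_apply]

theorem pd_coord (l j : Fin 3) (x : ℝ³) : pd (fun y => y l) j x = if l = j then 1 else 0 := by
  simp [pd, (hasFDerivAt_apply l x).fderiv, Pi.single_apply]

theorem differentiable_ite_coord (P : Prop) [Decidable P] (l : Fin 3) :
    Differentiable ℝ (fun x : ℝ³ => if P then x l else 0) := by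
  by_cases hP : P <;> simp [hP, differentiable_apply]

theorem pd_ite_coord (P : Prop) [Decidable P] (l j : Fin 3) (x : ℝ³) :
    pd (fun y => if P then y l else 0) j x = if P then (if l = j then 1 else 0) else 0 := by
  by_cases hP : P
  · simpa [hP] using pd_coord l j x
  · simp [hP, pd]

theorem H10.memLp_pd {s : Set ℝ³} {f : ℝ³ → ℝ} (hf : H10 s f) (j : Fin 3) :
    MemLp (pd f j) 2 (volume.restrict s) :=
  (memLp_two_iff_integrable_sq (measurable_pd f j).aestronglyMeasurable).2 (hf.2.2.2 j)

theorem memLp_pd_of_H10_sub {s : Set ℝ³} [IsFiniteMeasure (volume.restrict s)] {w ℓ : ℝ³ → ℝ}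
    (hw : Differentiable ℝ w) (hℓ : Differentiable ℝ ℓ) (hwℓ : H10 s (fun x => w x - ℓ x))
    {j : Fin 3} {K : ℝ} (hK : ∀ x, pd ℓ j x = K) : MemLp (pd w j) 2 (volume.restrict s) := by
  have hsplit : pd w j = fun x => pd (fun y => w y - ℓ y) j x + K := by
    funext x
    rw [pd_sub hw hℓ, hK]
    ring
  rw [hsplit]
  exact (hwℓ.memLp_pd j).add (memLp_const K)

theorem BddMeas.memLp_top {f : ℝ³ → ℝ} (hf : BddMeas f) (μ : Measure ℝ³) : MemLp f ⊤ μ :=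
  let ⟨hm, M, hM⟩ := hf
  memLp_top_of_bound hm.aestronglyMeasurable M
    (ae_of_all _ fun x => (Real.norm_eq_abs _).trans_le (hM x))

theorem integrable_sum_mul {α ι : Type*} [MeasurableSpace α] [Fintype ι] {μ : Measure α}
    {F G : ι → α → ℝ} (hF : ∀ j, MemLp (F j) 2 μ) (hG : ∀ j, MemLp (G j) 2 μ) :
    Integrable (fun x => ∑ j, F j x * G j x) μ :=
  integrable_finsetSum _ fun j _ => (hF j).integrable_mul (hG j)

def WeaklyDivergenceFree (s : Set ℝ³) (F : Fin 3 → ℝ³ → ℝ) : Prop :=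
  ∀ g, H10 s g → ∫ x in s, ∑ j, F j x * pd g j x = 0

theorem WeaklyDivergenceFree.integral_sum_mul_pd {s : Set ℝ³}
    [IsFiniteMeasure (volume.restrict s)] {F : Fin 3 → ℝ³ → ℝ} (hF : WeaklyDivergenceFree s F)
    (hF2 : ∀ j, MemLp (F j) 2 (volume.restrict s)) {w ℓ : ℝ³ → ℝ}
    (hw : Differentiable ℝ w) (hℓ : Differentiable ℝ ℓ) (hwℓ : H10 s (fun x => w x - ℓ x))
    {K : Fin 3 → ℝ} (hK : ∀ j x, pd ℓ j x = K j) :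
    ∫ x in s, ∑ j, F j x * pd w j x = ∫ x in s, ∑ j, F j x * K j := by
  have hsplit : ∀ x, ∑ j, F j x * pd w j x
      = ∑ j, F j x * pd (fun y => w y - ℓ y) j x + ∑ j, F j x * K j := by
    intro x
    simp only [pd_sub hw hℓ, hK, ← Finset.sum_add_distrib]
    exact Finset.sum_congr rfl fun j _ => by ring
  simp only [hsplit]
  rw [integral_add (integrable_sum_mul hF2 hwℓ.memLp_pd)
    (integrable_sum_mul hF2 fun j => memLp_const (K j)), hF _ hwℓ, zero_add]

theorem sum_comm₃ {ι : Type*} [Fintype ι] (A : ι → ι → ι → ℝ) :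
    ∑ p, ∑ q, ∑ h, A p q h = ∑ h, ∑ p, ∑ q, A p q h :=
  (Finset.sum_congr rfl fun _ _ => Finset.sum_comm).trans Finset.sum_comm

theorem sum_comm₄ {ι : Type*} [Fintype ι] (A : ι → ι → ι → ι → ℝ) :
    ∑ p, ∑ q, ∑ n, ∑ h, A p q n h = ∑ n, ∑ h, ∑ p, ∑ q, A p q n h :=
  calc ∑ p, ∑ q, ∑ n, ∑ h, A p q n h = ∑ p, ∑ n, ∑ h, ∑ q, A p q n h :=
        Finset.sum_congr rfl fun _ _ =>
          Finset.sum_comm.trans (Finset.sum_congr rfl fun _ _ => Finset.sum_comm)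
    _ = _ := Finset.sum_comm.trans (Finset.sum_congr rfl fun _ _ => Finset.sum_comm)

theorem piezo_bilinear_comm {ι : Type*} [Fintype ι] {C : ι → ι → ι → ι → ℝ}
    (E : ι → ι → ι → ℝ) {ε : ι → ι → ℝ} (hC : ∀ p q n h, C p q n h = C n h p q)
    (hε : ∀ m h, ε m h = ε h m) (U V : ι → ι → ℝ) (a b : ι → ℝ) :
    (∑ p, ∑ q, ((∑ n, ∑ h, C p q n h * U n h) + ∑ h, E h p q * a h) * V p q)
        + ∑ m, ((∑ n, ∑ h, E m n h * U n h) - ∑ h, ε m h * a h) * b m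
      = (∑ p, ∑ q, ((∑ n, ∑ h, C p q n h * V n h) + ∑ h, E h p q * b h) * U p q)
        + ∑ m, ((∑ n, ∑ h, E m n h * V n h) - ∑ h, ε m h * b h) * a m := by
  have elastic : ∑ p, ∑ q, (∑ n, ∑ h, C p q n h * U n h) * V p q
      = ∑ p, ∑ q, (∑ n, ∑ h, C p q n h * V n h) * U p q := by
    simp only [Finset.sum_mul]
    rw [sum_comm₄]
    refine Finset.sum_congr rfl fun n _ => Finset.sum_congr rfl fun h _ =>
      Finset.sum_congr rfl fun p _ => Finset.sum_congr rfl fun q _ => ?_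
    rw [hC]
    ring
  have coupling : ∀ (a : ι → ℝ) (V : ι → ι → ℝ), ∑ p, ∑ q, (∑ h, E h p q * a h) * V p q
      = ∑ m, (∑ n, ∑ h, E m n h * V n h) * a m := by
    intro a V
    simp only [Finset.sum_mul]
    rw [sum_comm₃]
    refine Finset.sum_congr rfl fun m _ => Finset.sum_congr rfl fun n _ =>
      Finset.sum_congr rfl fun h _ => ?_
    ring
  have dielectric : ∑ m, (∑ h, ε m h * a h) * b m = ∑ m, (∑ h, ε m h * b h) * a m := by
    simp only [Finset.sum_mul]
    rw [Finset.sum_comm]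
    refine Finset.sum_congr rfl fun m _ => Finset.sum_congr rfl fun h _ => ?_
    rw [hε]
    ring
  simp only [add_mul, sub_mul, Finset.sum_add_distrib, Finset.sum_sub_distrib]
  rw [elastic, coupling a V, ← coupling b U, dielectric]
  ring

namespace Piezo

variable (c : Fin 3 → Fin 3 → Fin 3 → Fin 3 → ℝ³ → ℝ) (e : Fin 3 → Fin 3 → Fin 3 → ℝ³ → ℝ)
  (ϵ : Fin 3 → Fin 3 → ℝ³ → ℝ)

def stress (u : Fin 3 → ℝ³ → ℝ) (φ : ℝ³ → ℝ) (p q : Fin 3) (x : ℝ³) : ℝ :=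
  (∑ n, ∑ h, c p q n h x * pd (u n) h x) + ∑ h, e h p q x * pd φ h x

def elecDisp (u : Fin 3 → ℝ³ → ℝ) (φ : ℝ³ → ℝ) (m : Fin 3) (x : ℝ³) : ℝ :=
  (∑ n, ∑ h, e m n h x * pd (u n) h x) - ∑ h, ϵ m h x * pd φ h x

def pairing (u : Fin 3 → ℝ³ → ℝ) (φ : ℝ³ → ℝ) (v : Fin 3 → ℝ³ → ℝ) (ψ : ℝ³ → ℝ) (x : ℝ³) : ℝ :=
  (∑ p, ∑ q, stress c e u φ p q x * pd (v p) q x) + ∑ m, elecDisp e ϵ u φ m x * pd ψ m x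

def IsWeakSolution (s : Set ℝ³) (u : Fin 3 → ℝ³ → ℝ) (φ : ℝ³ → ℝ) : Prop :=
  (∀ p, WeaklyDivergenceFree s (stress c e u φ p)) ∧ WeaklyDivergenceFree s (elecDisp e ϵ u φ)

def HasL2Grad (s : Set ℝ³) (u : Fin 3 → ℝ³ → ℝ) (φ : ℝ³ → ℝ) : Prop :=
  (∀ n h, MemLp (pd (u n) h) 2 (volume.restrict s)) ∧ ∀ h, MemLp (pd φ h) 2 (volume.restrict s)

variable {c e ϵ}

theorem cH_eq_average_stress (s : Set ℝ³) (P : Fin 3 → Fin 3 → Fin 3 → ℝ³ → ℝ)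
    (Φ : Fin 3 → Fin 3 → ℝ³ → ℝ) (i j k l : Fin 3) :
    cH c e s P Φ i j k l = ⨍ x in s, stress c e (P k l) (Φ k l) i j x :=
  rfl

theorem eH_eq_average_elecDisp (s : Set ℝ³) (P : Fin 3 → Fin 3 → Fin 3 → ℝ³ → ℝ)
    (Φ : Fin 3 → Fin 3 → ℝ³ → ℝ) (i k l : Fin 3) :
    eH e ϵ s P Φ i k l = ⨍ x in s, elecDisp e ϵ (P k l) (Φ k l) i x :=
  rfl

theorem epsH_eq_neg_average_elecDisp (s : Set ℝ³) (Q : Fin 3 → Fin 3 → ℝ³ → ℝ)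
    (Ψ : Fin 3 → ℝ³ → ℝ) (i l : Fin 3) :
    epsH e ϵ s Q Ψ i l = -⨍ x in s, elecDisp e ϵ (Q l) (Ψ l) i x :=
  rfl

theorem stress_comm (hc : ∀ p q n h x, c p q n h x = c q p n h x)
    (he : ∀ h p q x, e h p q x = e h q p x) (u : Fin 3 → ℝ³ → ℝ) (φ : ℝ³ → ℝ) (p q : Fin 3)
    (x : ℝ³) : stress c e u φ p q x = stress c e u φ q p x := by
  unfold stress
  congr 1
  · exact Finset.sum_congr rfl fun n _ => Finset.sum_congr rfl fun h _ => by rw [hc]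
  · exact Finset.sum_congr rfl fun h _ => by rw [he]

theorem integral_pairing_comm {μ : Measure ℝ³} (hc : ∀ p q n h x, c p q n h x = c n h p q x)
    (hϵ : ∀ m h x, ϵ m h x = ϵ h m x) (u v : Fin 3 → ℝ³ → ℝ) (φ ψ : ℝ³ → ℝ) :
    ∫ x, pairing c e ϵ u φ v ψ x ∂μ = ∫ x, pairing c e ϵ v ψ u φ x ∂μ := by
  congr 1
  funext x
  exact piezo_bilinear_comm (fun h p q => e h p q x) (fun p q n h => hc p q n h x)
    (fun m h => hϵ m h x) _ _ _ _

theorem HasL2Grad.of_displacement_bc {s : Set ℝ³} [IsFiniteMeasure (volume.restrict s)]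
    {v : Fin 3 → ℝ³ → ℝ} {ψ : ℝ³ → ℝ} {i j : Fin 3}
    (hv : ∀ p, Differentiable ℝ (v p))
    (hvbc : ∀ p, H10 s (fun x => v p x - if p = i then x j else 0)) (hψ : H10 s ψ) :
    HasL2Grad s v ψ :=
  ⟨fun p _ => memLp_pd_of_H10_sub (hv p) (differentiable_ite_coord _ _) (hvbc p)
    (pd_ite_coord _ _ _), hψ.memLp_pd⟩

theorem HasL2Grad.of_potential_bc {s : Set ℝ³} [IsFiniteMeasure (volume.restrict s)]
    {v : Fin 3 → ℝ³ → ℝ} {ψ : ℝ³ → ℝ} {i : Fin 3}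
    (hv : ∀ p, H10 s (v p)) (hψ : Differentiable ℝ ψ) (hψbc : H10 s (fun x => ψ x - x i)) :
    HasL2Grad s v ψ :=
  ⟨fun p => (hv p).memLp_pd, fun m =>
    memLp_pd_of_H10_sub hψ (differentiable_apply i) hψbc (pd_coord i m)⟩

section Cells

variable {s : Set ℝ³} {u : Fin 3 → ℝ³ → ℝ} {φ : ℝ³ → ℝ}
  (hc : ∀ p q n h, BddMeas (c p q n h)) (he : ∀ h p q, BddMeas (e h p q))
  (hϵ : ∀ m h, BddMeas (ϵ m h)) (hu : HasL2Grad s u φ)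
include hu

include hc he in
theorem memLp_stress (p q : Fin 3) : MemLp (stress c e u φ p q) 2 (volume.restrict s) :=
  (memLp_finsetSum _ fun n _ => memLp_finsetSum _ fun h _ =>
      (hu.1 n h).mul' ((hc p q n h).memLp_top _)).add
    (memLp_finsetSum _ fun h _ => (hu.2 h).mul' ((he h p q).memLp_top _))

include he hϵ in
theorem memLp_elecDisp (m : Fin 3) : MemLp (elecDisp e ϵ u φ m) 2 (volume.restrict s) :=
  (memLp_finsetSum _ fun n _ => memLp_finsetSum _ fun h _ =>
      (hu.1 n h).mul' ((he m n h).memLp_top _)).sub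
    (memLp_finsetSum _ fun h _ => (hu.2 h).mul' ((hϵ m h).memLp_top _))

include hc he hϵ in
theorem integral_pairing {v : Fin 3 → ℝ³ → ℝ} {ψ : ℝ³ → ℝ} (hv : HasL2Grad s v ψ) :
    ∫ x in s, pairing c e ϵ u φ v ψ x
      = (∑ p, ∫ x in s, ∑ q, stress c e u φ p q x * pd (v p) q x)
        + ∫ x in s, ∑ m, elecDisp e ϵ u φ m x * pd ψ m x := by
  have hrow : ∀ p, Integrable (fun x => ∑ q, stress c e u φ p q x * pd (v p) q x)
      (volume.restrict s) :=
    fun p => integrable_sum_mul (memLp_stress hc he hu p) (hv.1 p)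
  simp only [pairing]
  rw [integral_add (integrable_finsetSum _ fun p _ => hrow p)
      (integrable_sum_mul (memLp_elecDisp he hϵ hu) hv.2),
    integral_finsetSum _ fun p _ => hrow p]

variable (hsol : IsWeakSolution c e ϵ s u φ)
include hc he hϵ hsol

theorem integral_pairing_of_displacement_cell [IsFiniteMeasure (volume.restrict s)]
    {v : Fin 3 → ℝ³ → ℝ} {ψ : ℝ³ → ℝ} {i j : Fin 3}
    (hv : ∀ p, Differentiable ℝ (v p))
    (hvbc : ∀ p, H10 s (fun x => v p x - if p = i then x j else 0)) (hψ : H10 s ψ) :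
    ∫ x in s, pairing c e ϵ u φ v ψ x = ∫ x in s, stress c e u φ i j x := by
  have hrow : ∀ p, ∫ x in s, ∑ q, stress c e u φ p q x * pd (v p) q x
      = if p = i then ∫ x in s, stress c e u φ i j x else 0 := by
    intro p
    rw [(hsol.1 p).integral_sum_mul_pd (memLp_stress hc he hu p) (hv p)
      (differentiable_ite_coord _ _) (hvbc p) fun q x => pd_ite_coord _ _ _ x]
    by_cases hp : p = i
    · subst hp
      simp
    · simp [hp]
  rw [integral_pairing hc he hϵ hu (.of_displacement_bc hv hvbc hψ), hsol.2 ψ hψ, add_zero]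
  simp [hrow]

theorem integral_pairing_of_potential_cell [IsFiniteMeasure (volume.restrict s)]
    {v : Fin 3 → ℝ³ → ℝ} {ψ : ℝ³ → ℝ} {i : Fin 3}
    (hv : ∀ p, H10 s (v p)) (hψ : Differentiable ℝ ψ) (hψbc : H10 s (fun x => ψ x - x i)) :
    ∫ x in s, pairing c e ϵ u φ v ψ x = ∫ x in s, elecDisp e ϵ u φ i x := by
  rw [integral_pairing hc he hϵ hu (.of_potential_bc hv hψ hψbc),
    Finset.sum_eq_zero fun p _ => hsol.1 p (v p) (hv p), zero_add,
    hsol.2.integral_sum_mul_pd (memLp_elecDisp he hϵ hu) hψ (differentiable_apply i) hψbc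
      (pd_coord i)]
  simp

end Cells

end Piezo

open Piezo in
theorem hmm_effective_coefficients_symmetry_general
    (c : Fin 3 → Fin 3 → Fin 3 → Fin 3 → (Fin 3 → ℝ) → ℝ)
    (e : Fin 3 → Fin 3 → Fin 3 → (Fin 3 → ℝ) → ℝ)
    (ϵ : Fin 3 → Fin 3 → (Fin 3 → ℝ) → ℝ)
    (hc : ∀ i j k l, BddMeas (c i j k l)) (he : ∀ k i j, BddMeas (e k i j))
    (hϵ : ∀ i j, BddMeas (ϵ i j))
    (hcsym : ∀ i j k l x, c i j k l x = c j i k l x ∧ c i j k l x = c k l i j x)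
    (hesym : ∀ k i j x, e k i j x = e k j i x)
    (hϵsym : ∀ i j x, ϵ i j x = ϵ j i x)
    (xα : Fin 3 → ℝ) (δ : ℝ)
    -- the first family of cell problems `(P^{kl}, Φ_{kl})`
    (P : Fin 3 → Fin 3 → Fin 3 → (Fin 3 → ℝ) → ℝ) (Φ : Fin 3 → Fin 3 → (Fin 3 → ℝ) → ℝ)
    (hPreg : ∀ k l n, Differentiable ℝ (P k l n))
    (hPbc : ∀ k l n, H10 (cube xα δ) (fun x => P k l n x - if n = k then x l else 0))
    (hΦbc : ∀ k l, H10 (cube xα δ) (Φ k l))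
    (hP1 : ∀ k l i', ∀ g, H10 (cube xα δ) g →
      ∫ x in cube xα δ, (∑ j, ((∑ n, ∑ h, c i' j n h x * pd (P k l n) h x)
        + ∑ h, e h i' j x * pd (Φ k l) h x) * pd g j x) = 0)
    (hP2 : ∀ k l, ∀ g, H10 (cube xα δ) g →
      ∫ x in cube xα δ, (∑ i', ((∑ n, ∑ h, e i' n h x * pd (P k l n) h x)
        - ∑ h, ϵ i' h x * pd (Φ k l) h x) * pd g i' x) = 0)
    -- the second family of cell problems `(Q^{l}, Ψ_l)`
    (Q : Fin 3 → Fin 3 → (Fin 3 → ℝ) → ℝ) (Ψ : Fin 3 → (Fin 3 → ℝ) → ℝ)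
    (hΨreg : ∀ l, Differentiable ℝ (Ψ l))
    (hQbc : ∀ l n, H10 (cube xα δ) (Q l n))
    (hΨbc : ∀ l, H10 (cube xα δ) (fun x => Ψ l x - x l))
    (hQ1 : ∀ l i', ∀ g, H10 (cube xα δ) g →
      ∫ x in cube xα δ, (∑ j, ((∑ n, ∑ h, c i' j n h x * pd (Q l n) h x)
        + ∑ h, e h i' j x * pd (Ψ l) h x) * pd g j x) = 0)
    (hQ2 : ∀ l, ∀ g, H10 (cube xα δ) g →
      ∫ x in cube xα δ, (∑ i', ((∑ n, ∑ h, e i' n h x * pd (Q l n) h x)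
        - ∑ h, ϵ i' h x * pd (Ψ l) h x) * pd g i' x) = 0) :
    (∀ i j k l, cH c e (cube xα δ) P Φ i j k l = cH c e (cube xα δ) P Φ j i k l ∧
        cH c e (cube xα δ) P Φ i j k l = cH c e (cube xα δ) P Φ k l i j) ∧
    (∀ k i j, eH e ϵ (cube xα δ) P Φ k i j = eH e ϵ (cube xα δ) P Φ k j i) ∧
    (∀ i j, epsH e ϵ (cube xα δ) Q Ψ i j = epsH e ϵ (cube xα δ) Q Ψ j i) := by
  set s := cube xα δ
  have : IsFiniteMeasure (volume.restrict s) := isFiniteMeasure_restrict.2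
    (isCompact_univ_pi fun _ => isCompact_Icc).measure_lt_top.ne
  have hcminor : ∀ p q n h x, c p q n h x = c q p n h x := fun p q n h x => (hcsym p q n h x).1
  have hcmajor : ∀ p q n h x, c p q n h x = c n h p q x := fun p q n h x => (hcsym p q n h x).2
  have gradP : ∀ k l, HasL2Grad s (P k l) (Φ k l) := fun k l =>
    .of_displacement_bc (hPreg k l) (hPbc k l) (hΦbc k l)
  have gradQ : ∀ l, HasL2Grad s (Q l) (Ψ l) := fun l =>
    .of_potential_bc (hQbc l) (hΨreg l) (hΨbc l)
  have PP : ∀ k l i j, ∫ x in s, pairing c e ϵ (P k l) (Φ k l) (P i j) (Φ i j) x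
      = ∫ x in s, stress c e (P k l) (Φ k l) i j x := fun k l i j =>
    integral_pairing_of_displacement_cell hc he hϵ (gradP k l) ⟨hP1 k l, hP2 k l⟩
      (hPreg i j) (hPbc i j) (hΦbc i j)
  have QP : ∀ l i j, ∫ x in s, pairing c e ϵ (Q l) (Ψ l) (P i j) (Φ i j) x
      = ∫ x in s, stress c e (Q l) (Ψ l) i j x := fun l i j =>
    integral_pairing_of_displacement_cell hc he hϵ (gradQ l) ⟨hQ1 l, hQ2 l⟩
      (hPreg i j) (hPbc i j) (hΦbc i j)
  have PQ : ∀ k l i, ∫ x in s, pairing c e ϵ (P k l) (Φ k l) (Q i) (Ψ i) x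
      = ∫ x in s, elecDisp e ϵ (P k l) (Φ k l) i x := fun k l i =>
    integral_pairing_of_potential_cell hc he hϵ (gradP k l) ⟨hP1 k l, hP2 k l⟩
      (hQbc i) (hΨreg i) (hΨbc i)
  have QQ : ∀ l i, ∫ x in s, pairing c e ϵ (Q l) (Ψ l) (Q i) (Ψ i) x
      = ∫ x in s, elecDisp e ϵ (Q l) (Ψ l) i x := fun l i =>
    integral_pairing_of_potential_cell hc he hϵ (gradQ l) ⟨hQ1 l, hQ2 l⟩
      (hQbc i) (hΨreg i) (hΨbc i)
  refine ⟨fun i j k l => ⟨?_, ?_⟩, fun k i j => ?_, fun i j => ?_⟩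
  · exact congrArg _ (funext fun x => stress_comm hcminor hesym _ _ i j x)
  · rw [cH_eq_average_stress, cH_eq_average_stress, setAverage_eq, setAverage_eq, ← PP,
      integral_pairing_comm hcmajor hϵsym, PP]
  · rw [eH_eq_average_elecDisp, eH_eq_average_elecDisp, setAverage_eq, setAverage_eq, ← PQ,
      ← PQ, integral_pairing_comm hcmajor hϵsym, QP, integral_pairing_comm hcmajor hϵsym, QP]
    exact congrArg _ (congrArg _ (funext fun x => stress_comm hcminor hesym _ _ i j x))
  · rw [epsH_eq_neg_average_elecDisp, epsH_eq_neg_average_elecDisp, setAverage_eq,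
      setAverage_eq, ← QQ, integral_pairing_comm hcmajor hϵsym, QQ]

/-- the HMM effective tensors inherit the symmetries of the
microscopic tensors. -/
theorem hmm_effective_coefficients_symmetry
    (c : Fin 3 → Fin 3 → Fin 3 → Fin 3 → (Fin 3 → ℝ) → ℝ)
    (e : Fin 3 → Fin 3 → Fin 3 → (Fin 3 → ℝ) → ℝ)
    (ϵ : Fin 3 → Fin 3 → (Fin 3 → ℝ) → ℝ)
    (hc : ∀ i j k l, BddMeas (c i j k l)) (he : ∀ k i j, BddMeas (e k i j))
    (hϵ : ∀ i j, BddMeas (ϵ i j))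
    (hcsym : ∀ i j k l x, c i j k l x = c j i k l x ∧ c i j k l x = c k l i j x)
    (hesym : ∀ k i j x, e k i j x = e k j i x)
    (hϵsym : ∀ i j x, ϵ i j x = ϵ j i x)
    (hcell : ∃ α > (0:ℝ), ∀ x (X : Fin 3 → Fin 3 → ℝ), (∀ i j, X i j = X j i) →
      α * (∑ i, ∑ j, X i j ^ 2) ≤ ∑ i, ∑ j, ∑ k, ∑ l, c i j k l x * X i j * X k l)
    (hϵell : ∃ β > (0:ℝ), ∀ x (v : Fin 3 → ℝ),
      β * (∑ i, v i ^ 2) ≤ ∑ i, ∑ j, ϵ i j x * v i * v j)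
    (xα : Fin 3 → ℝ) (δ : ℝ) (hδ : 0 < δ)
    -- the first family of cell problems `(P^{kl}, Φ_{kl})`
    (P : Fin 3 → Fin 3 → Fin 3 → (Fin 3 → ℝ) → ℝ) (Φ : Fin 3 → Fin 3 → (Fin 3 → ℝ) → ℝ)
    (hPreg : ∀ k l n, Differentiable ℝ (P k l n))
    (hPbc : ∀ k l n, H10 (cube xα δ) (fun x => P k l n x - if n = k then x l else 0))
    (hΦbc : ∀ k l, H10 (cube xα δ) (Φ k l))
    (hP1 : ∀ k l i', ∀ g, H10 (cube xα δ) g →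
      ∫ x in cube xα δ, (∑ j, ((∑ n, ∑ h, c i' j n h x * pd (P k l n) h x)
        + ∑ h, e h i' j x * pd (Φ k l) h x) * pd g j x) = 0)
    (hP2 : ∀ k l, ∀ g, H10 (cube xα δ) g →
      ∫ x in cube xα δ, (∑ i', ((∑ n, ∑ h, e i' n h x * pd (P k l n) h x)
        - ∑ h, ϵ i' h x * pd (Φ k l) h x) * pd g i' x) = 0)
    -- the second family of cell problems `(Q^{l}, Ψ_l)`
    (Q : Fin 3 → Fin 3 → (Fin 3 → ℝ) → ℝ) (Ψ : Fin 3 → (Fin 3 → ℝ) → ℝ)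
    (hΨreg : ∀ l, Differentiable ℝ (Ψ l))
    (hQbc : ∀ l n, H10 (cube xα δ) (Q l n))
    (hΨbc : ∀ l, H10 (cube xα δ) (fun x => Ψ l x - x l))
    (hQ1 : ∀ l i', ∀ g, H10 (cube xα δ) g →
      ∫ x in cube xα δ, (∑ j, ((∑ n, ∑ h, c i' j n h x * pd (Q l n) h x)
        + ∑ h, e h i' j x * pd (Ψ l) h x) * pd g j x) = 0)
    (hQ2 : ∀ l, ∀ g, H10 (cube xα δ) g →
      ∫ x in cube xα δ, (∑ i', ((∑ n, ∑ h, e i' n h x * pd (Q l n) h x)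
        - ∑ h, ϵ i' h x * pd (Ψ l) h x) * pd g i' x) = 0) :
    (∀ i j k l, cH c e (cube xα δ) P Φ i j k l = cH c e (cube xα δ) P Φ j i k l ∧
        cH c e (cube xα δ) P Φ i j k l = cH c e (cube xα δ) P Φ k l i j) ∧
    (∀ k i j, eH e ϵ (cube xα δ) P Φ k i j = eH e ϵ (cube xα δ) P Φ k j i) ∧
    (∀ i j, epsH e ϵ (cube xα δ) Q Ψ i j = epsH e ϵ (cube xα δ) Q Ψ j i) :=
  hmm_effective_coefficients_symmetry_general c e ϵ hc he hϵ hcsym hesym hϵsym xα δ P Φ hPreg hPbc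
    hΦbc hP1 hP2 Q Ψ hΨreg hQbc hΨbc hQ1 hQ2
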